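/- arXiv:math/9407218 — 3 statements merged into one kernel-verified Lean document; each statement's English description precedes it below -/
import Mathlib

section
/- Suppose a C¹ curve is the graph of a function Z: [0,1) → [0,1] with |Z'(x)| ≤ π/10 for all x. If the image of this graph under f is again the graph of a function Z₁ over [0,1) (after applying x ↦ 3x mod 1), then |Z₁'(x)| ≤ π/10 for all x. -/
open Real Set

/-- Invariance of the slope cone `|s| ≤ π/10` under the Kan annulus map,
working on the real cover of the circle (the `x`-dynamics is `x ↦ 3x`). -/
theorem stmt_7 (Z Z₁ Z' Z₁' : ℝ → ℝ)
    (hZd : ∀ x, HasDerivAt Z (Z' x) x)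
    (hZ₁d : ∀ x, HasDerivAt Z₁ (Z₁' x) x)
    (hrange : ∀ x, Z x ∈ Set.Icc (0:ℝ) 1)
    (hslope : ∀ x, |Z' x| ≤ π / 10)
    (hgraph : ∀ x, Z₁ (3 * x) =
        Z x + Real.cos (2 * π * x) * (Z x / 32) * (1 - Z x)) :
    ∀ x, |Z₁' x| ≤ π / 10 := by
  intro y
  set x := y / 3 with hx
  have hy : 3 * x = y := by rw [hx]; ring
  -- derivative of the inner map x ↦ 3 * x
  have h3 : HasDerivAt (fun t : ℝ => 3 * t) 3 x := by
    simpa using (hasDerivAt_id x).const_mul (3:ℝ)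
  have hL : HasDerivAt (fun t => Z₁ (3 * t)) (Z₁' (3 * x) * 3) x :=
    (hZ₁d (3 * x)).comp x h3
  -- derivative of cos (2πx)
  have h2π : HasDerivAt (fun t : ℝ => 2 * π * t) (2 * π) x := by
    simpa using (hasDerivAt_id x).const_mul (2 * π)
  have hcos : HasDerivAt (fun t => Real.cos (2 * π * t))
      (-Real.sin (2 * π * x) * (2 * π)) x :=
    (Real.hasDerivAt_cos (2 * π * x)).comp x h2π
  have hR : HasDerivAt
      (fun t => Z t + Real.cos (2 * π * t) * (Z t / 32) * (1 - Z t))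
      (Z' x + (((-Real.sin (2 * π * x) * (2 * π)) * (Z x / 32)
          + Real.cos (2 * π * x) * (Z' x / 32)) * (1 - Z x)
        + Real.cos (2 * π * x) * (Z x / 32) * (0 - Z' x))) x := by
    exact (hZd x).add ((hcos.mul ((hZd x).div_const 32)).mul
      ((hasDerivAt_const x (1:ℝ)).sub (hZd x)))
  have hfun : (fun t => Z₁ (3 * t))
      = fun t => Z t + Real.cos (2 * π * t) * (Z t / 32) * (1 - Z t) :=
    funext hgraph
  have heq : Z₁' (3 * x) * 3
      = Z' x + (((-Real.sin (2 * π * x) * (2 * π)) * (Z x / 32)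
          + Real.cos (2 * π * x) * (Z' x / 32)) * (1 - Z x)
        + Real.cos (2 * π * x) * (Z x / 32) * (0 - Z' x)) :=
    (hfun ▸ hL).unique hR
  rw [hy] at heq
  -- bounds
  have hZ0 := (hrange x).1
  have hZ1 := (hrange x).2
  have hs := hslope x
  have hsin : |Real.sin (2 * π * x)| ≤ 1 := Real.abs_sin_le_one _
  have hcos1 : |Real.cos (2 * π * x)| ≤ 1 := Real.abs_cos_le_one _
  have hπ : (0:ℝ) < π := Real.pi_pos
  have hZabs : |Z x| ≤ 1 := abs_le.2 ⟨by linarith, hZ1⟩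
  have h1Z : |1 - Z x| ≤ 1 := abs_le.2 ⟨by linarith, by linarith⟩
  have hs' : -(π/10) ≤ Z' x ∧ Z' x ≤ π/10 := abs_le.1 hs
  have hsin' := abs_le.1 hsin
  have hcos' := abs_le.1 hcos1
  have hZ₁y : Z₁' y = (Z' x + ((-Real.sin (2 * π * x) * (2 * π)) * (Z x / 32)
          + Real.cos (2 * π * x) * (Z' x / 32)) * (1 - Z x)
        + Real.cos (2 * π * x) * (Z x / 32) * (0 - Z' x)) / 3 := by
    linarith
  rw [hZ₁y, abs_div, abs_of_pos (by norm_num : (0:ℝ) < 3), div_le_iff₀ (by norm_num : (0:ℝ) < 3)]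
  have hA : |(-Real.sin (2 * π * x) * (2 * π)) * (Z x / 32)| ≤ π / 16 := by
    rw [abs_mul, abs_mul, abs_neg, abs_div]
    calc |Real.sin (2*π*x)| * |2*π| * (|Z x| / |(32:ℝ)|)
        ≤ 1 * (2*π) * (1 / 32) := by
          apply mul_le_mul
          · exact mul_le_mul hsin (le_of_eq (abs_of_pos (by linarith))) (abs_nonneg _) zero_le_one
          · apply div_le_div₀ (by norm_num) hZabs (by norm_num)
            simp [abs_of_pos]
          · positivity
          · positivity
      _ = π / 16 := by ring
  have hB : |Real.cos (2 * π * x) * (Z' x / 32)| ≤ π / 320 := by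
    rw [abs_mul, abs_div]
    calc |Real.cos (2*π*x)| * (|Z' x| / |(32:ℝ)|)
        ≤ 1 * ((π/10) / 32) := by
          apply mul_le_mul hcos1 _ (by positivity) zero_le_one
          apply div_le_div₀ (by positivity) hs (by norm_num)
          simp
      _ = π / 320 := by ring
  have hAB : |((-Real.sin (2 * π * x) * (2 * π)) * (Z x / 32)
          + Real.cos (2 * π * x) * (Z' x / 32)) * (1 - Z x)| ≤ π / 16 + π / 320 := by
    rw [abs_mul]
    calc |(-Real.sin (2*π*x) * (2*π)) * (Z x / 32) + Real.cos (2*π*x) * (Z' x / 32)| * |1 - Z x|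
        ≤ (π/16 + π/320) * 1 := by
          apply mul_le_mul _ h1Z (abs_nonneg _) (by positivity)
          exact le_trans (abs_add_le _ _) (add_le_add hA hB)
      _ = π/16 + π/320 := by ring
  have hC : |Real.cos (2 * π * x) * (Z x / 32) * (0 - Z' x)| ≤ π / 320 := by
    rw [abs_mul, abs_mul, abs_div]
    have : |(0:ℝ) - Z' x| = |Z' x| := by rw [zero_sub, abs_neg]
    rw [this]
    calc |Real.cos (2*π*x)| * (|Z x| / |(32:ℝ)|) * |Z' x|
        ≤ 1 * (1/32) * (π/10) := by
          apply mul_le_mul _ hs (abs_nonneg _) (by positivity)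
          apply mul_le_mul hcos1 _ (by positivity) zero_le_one
          apply div_le_div₀ (by norm_num) hZabs (by norm_num)
          simp
      _ = π/320 := by ring
  calc |Z' x + ((-Real.sin (2 * π * x) * (2 * π)) * (Z x / 32)
          + Real.cos (2 * π * x) * (Z' x / 32)) * (1 - Z x)
        + Real.cos (2 * π * x) * (Z x / 32) * (0 - Z' x)|
      ≤ |Z' x| + π/16 + π/320 + π/320 := by
        have := abs_add_le (Z' x + ((-Real.sin (2 * π * x) * (2 * π)) * (Z x / 32)
          + Real.cos (2 * π * x) * (Z' x / 32)) * (1 - Z x))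
          (Real.cos (2 * π * x) * (Z x / 32) * (0 - Z' x))
        have h2 := abs_add_le (Z' x) (((-Real.sin (2 * π * x) * (2 * π)) * (Z x / 32)
          + Real.cos (2 * π * x) * (Z' x / 32)) * (1 - Z x))
        linarith
    _ ≤ π/10 + π/16 + π/320 + π/320 := by linarith
    _ ≤ π/10 * 3 := by nlinarith [hπ]
end

section
/- If γ = [n 3^{-r}, (n+1) 3^{-r}) × {ρ} is a horizontal segment in S¹ × [0,1], then f^r(γ) is the graph of a function Z: [0,1) → [0,1] whose derivative satisfies |Z'(x)| ≤ π/10 for all x. -/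
/-!
Along `[n 3⁻ʳ, (n+1) 3⁻ʳ)` the horizontal coordinate of `f^r` is `3ʳ x - n`, a bijection onto
`[0,1)`, so the image of the segment is a graph over `[0,1)`. Its slope is controlled by a cone
argument: the vertical map `z ↦ z + c z (1 - z) / 32` multiplies vertical slopes by at most
`33/32` and, through `c = cos (2πx)`, adds at most `2π/128`, while the base map `x ↦ 3x`
divides slopes by `3`; since `(33/32 · π/10 + 2π/128) / 3 ≤ π/10`, the cone `|s| ≤ π/10`
is invariant and contains the horizontal segment.
-/

open Real Set

noncomputable def kanMap (p : ℝ × ℝ) : ℝ × ℝ :=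
  (Int.fract (3 * p.1), p.2 + Real.cos (2 * π * p.1) * (p.2 / 32) * (1 - p.2))

noncomputable def kanStep (c z : ℝ) : ℝ := z + c * (z / 32) * (1 - z)

lemma kanMap_apply (p : ℝ × ℝ) :
    kanMap p = (Int.fract (3 * p.1), kanStep (cos (2 * π * p.1)) p.2) := rfl

lemma kanStep_mem_Icc {c z : ℝ} (hc : |c| ≤ 1) (hz : z ∈ Icc (0 : ℝ) 1) :
    kanStep c z ∈ Icc (0 : ℝ) 1 := by
  obtain ⟨hc₁, hc₂⟩ := abs_le.mp hc
  have hw : 0 ≤ z * (1 - z) := mul_nonneg hz.1 (sub_nonneg.mpr hz.2)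
  constructor <;> unfold kanStep <;> nlinarith [hz.1, hz.2]

lemma HasDerivAt.kanStep {c z : ℝ → ℝ} {c' z' x : ℝ} (hc : HasDerivAt c c' x)
    (hz : HasDerivAt z z' x) :
    HasDerivAt (fun x => kanStep (c x) (z x))
      ((1 + c x * (1 - 2 * z x) / 32) * z' + z x * (1 - z x) / 32 * c') x := by
  refine (hz.add ((hc.mul (hz.div_const 32)).mul ((hasDerivAt_const x 1).sub hz))).congr_deriv ?_
  simp only [Pi.sub_apply, Pi.mul_apply]
  ring

lemma abs_kanStep_deriv_le {c z c' z' B : ℝ} (hc : |c| ≤ 1) (hz : z ∈ Icc (0 : ℝ) 1)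
    (hc' : |c'| ≤ 2 * π * B) (hz' : |z'| ≤ π / 10 * B) :
    |(1 + c * (1 - 2 * z) / 32) * z' + z * (1 - z) / 32 * c'| ≤ π / 10 * (3 * B) := by
  have hB : 0 ≤ B := by nlinarith [abs_nonneg z', pi_pos]
  have hvert : |1 + c * (1 - 2 * z) / 32| ≤ 33 / 32 := by
    have : |c * (1 - 2 * z)| ≤ 1 := by
      rw [abs_mul]
      exact mul_le_one₀ hc (abs_nonneg _) (abs_le.mpr ⟨by linarith [hz.2], by linarith [hz.1]⟩)
    rw [abs_le] at this ⊢
    constructor <;> linarith [this.1, this.2]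
  have hhor : |z * (1 - z) / 32| ≤ 1 / 128 := by
    rw [abs_of_nonneg (by have := mul_nonneg hz.1 (sub_nonneg.mpr hz.2); positivity)]
    nlinarith [sq_nonneg (z - 1 / 2)]
  calc |(1 + c * (1 - 2 * z) / 32) * z' + z * (1 - z) / 32 * c'|
      ≤ 33 / 32 * (π / 10 * B) + 1 / 128 * (2 * π * B) := by
        refine (abs_add_le _ _).trans (add_le_add ?_ ?_) <;> rw [abs_mul]
        · exact mul_le_mul hvert hz' (abs_nonneg _) (by norm_num)
        · exact mul_le_mul hhor hc' (abs_nonneg _) (by norm_num)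
    _ ≤ π / 10 * (3 * B) := by nlinarith [mul_nonneg pi_pos.le hB]

/-- `kanHeight ρ k x` is the height of `kanMap^[k] (x, ρ)`; its slope is measured against the
horizontal coordinate `3 ^ k * x` of that point. -/
noncomputable def kanHeight (ρ : ℝ) : ℕ → ℝ → ℝ
  | 0 => fun _ => ρ
  | k + 1 => fun x => kanStep (cos (2 * π * (3 ^ k * x))) (kanHeight ρ k x)

lemma kanHeight_mem_Icc {ρ : ℝ} (hρ : ρ ∈ Icc (0 : ℝ) 1) (k : ℕ) (x : ℝ) :
    kanHeight ρ k x ∈ Icc (0 : ℝ) 1 := by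
  induction k with
  | zero => exact hρ
  | succ k ih => exact kanStep_mem_Icc (abs_cos_le_one _) ih

lemma exists_hasDerivAt_kanHeight {ρ : ℝ} (hρ : ρ ∈ Icc (0 : ℝ) 1) (k : ℕ) (x : ℝ) :
    ∃ d, HasDerivAt (kanHeight ρ k) d x ∧ |d| ≤ π / 10 * 3 ^ k := by
  induction k with
  | zero => exact ⟨0, hasDerivAt_const x ρ, by simp; positivity⟩
  | succ k ih =>
    obtain ⟨d, hd, hd_le⟩ := ih
    have hphase : HasDerivAt (fun x : ℝ => 2 * π * (3 ^ k * x)) (2 * π * 3 ^ k) x := by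
      simpa using ((hasDerivAt_id x).const_mul ((3 : ℝ) ^ k)).const_mul (2 * π)
    refine ⟨_, ((hasDerivAt_cos _).comp x hphase).kanStep hd, ?_⟩
    rw [pow_succ, mul_comm _ (3 : ℝ)]
    refine abs_kanStep_deriv_le (abs_cos_le_one _) (kanHeight_mem_Icc hρ k x) ?_ hd_le
    rw [abs_mul, abs_neg, abs_of_pos (by positivity : (0 : ℝ) < 2 * π * 3 ^ k)]
    exact mul_le_of_le_one_left (by positivity) (abs_sin_le_one _)

lemma kanMap_iterate_fract (ρ : ℝ) (k : ℕ) (x : ℝ) :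
    kanMap^[k] (Int.fract x, ρ) = (Int.fract (3 ^ k * x), kanHeight ρ k x) := by
  induction k with
  | zero => simp [kanHeight]
  | succ k ih =>
    have hfract : Int.fract (3 * Int.fract (3 ^ k * x)) = Int.fract (3 ^ (k + 1) * x) :=
      Int.fract_eq_fract.mpr ⟨-3 * ⌊(3 : ℝ) ^ k * x⌋, by rw [Int.fract]; push_cast; ring⟩
    have hcos : cos (2 * π * Int.fract (3 ^ k * x)) = cos (2 * π * (3 ^ k * x)) := by
      rw [Int.fract, mul_sub, mul_comm (2 * π) (⌊_⌋ : ℝ), cos_sub_int_mul_two_pi]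
    rw [Function.iterate_succ_apply', ih, kanMap_apply, hfract, hcos]
    rfl

lemma kanMap_iterate_add_div {ρ y : ℝ} (hy : y ∈ Ico (0 : ℝ) 1) {r n : ℕ} (hn : n < 3 ^ r) :
    kanMap^[r] ((n + y) / 3 ^ r, ρ) = (y, kanHeight ρ r ((n + y) / 3 ^ r)) := by
  have h3r : (0 : ℝ) < 3 ^ r := by positivity
  have hn' : (n : ℝ) + 1 ≤ 3 ^ r := by exact_mod_cast hn
  have hx : Int.fract (((n : ℝ) + y) / 3 ^ r) = (n + y) / 3 ^ r :=
    Int.fract_eq_self.mpr ⟨by have := hy.1; positivity,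
      (div_lt_one h3r).mpr (by linarith [hy.2])⟩
  rw [← hx, kanMap_iterate_fract, hx, mul_div_cancel₀ _ h3r.ne', Int.fract_natCast_add,
    Int.fract_eq_self.mpr hy]

lemma image_add_div_Ico_zero_one {K : Type*} [Field K] [LinearOrder K] [IsStrictOrderedRing K]
    {a : K} (ha : 0 < a) (b : K) :
    (fun y => (b + y) / a) '' Ico 0 1 = Ico (b / a) ((b + 1) / a) := by
  convert image_affine_Ico (inv_pos.mpr ha) (b / a) 0 1 using 1
  · congr 1; funext y; ring
  · congr 1 <;> ring

/-- The `r`-th iterate of a horizontal segment `[n 3⁻ʳ, (n+1) 3⁻ʳ) × {ρ}` is the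
graph of a function `Z : [0,1) → [0,1]` whose slope is at most `π/10`. -/
theorem stmt_8 (r n : ℕ) (hn : n < 3 ^ r) (ρ : ℝ) (hρ : ρ ∈ Set.Icc (0:ℝ) 1) :
    ∃ Z : ℝ → ℝ, Differentiable ℝ Z ∧
      (∀ x ∈ Set.Ico (0:ℝ) 1, Z x ∈ Set.Icc (0:ℝ) 1) ∧
      (∀ x ∈ Set.Ico (0:ℝ) 1, |deriv Z x| ≤ π / 10) ∧
      kanMap^[r] '' (Set.Ico ((n : ℝ) / 3 ^ r) ((n + 1 : ℝ) / 3 ^ r) ×ˢ {ρ}) =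
        {p : ℝ × ℝ | p.1 ∈ Set.Ico (0:ℝ) 1 ∧ p.2 = Z p.1} := by
  have h3r : (0 : ℝ) < 3 ^ r := by positivity
  set Z : ℝ → ℝ := fun y => kanHeight ρ r ((n + y) / 3 ^ r)
  have hZ : ∀ y, ∃ d, HasDerivAt Z d y ∧ |d| ≤ π / 10 := fun y => by
    obtain ⟨d, hd, hd_le⟩ := exists_hasDerivAt_kanHeight hρ r ((n + y) / 3 ^ r)
    refine ⟨d * (1 / 3 ^ r), hd.comp y (((hasDerivAt_id' y).const_add _).div_const _), ?_⟩
    rwa [abs_mul, abs_of_pos (by positivity : (0 : ℝ) < 1 / 3 ^ r), ← div_eq_mul_one_div,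
      div_le_iff₀ h3r]
  choose dZ hdZ hdZ_le using hZ
  refine ⟨Z, fun y => (hdZ y).differentiableAt, fun y _ => kanHeight_mem_Icc hρ r _,
    fun y _ => (hdZ y).deriv ▸ hdZ_le y, ?_⟩
  have hgraph : kanMap^[r] '' (Ico ((n : ℝ) / 3 ^ r) ((n + 1 : ℝ) / 3 ^ r) ×ˢ {ρ}) =
      (Ico 0 1).graphOn Z := by
    rw [← image_add_div_Ico_zero_one h3r, prod_singleton, image_image, image_image]
    exact image_congr fun y hy => kanMap_iterate_add_div hy hn
  rw [hgraph]
  ext p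
  simp [eq_comm]
end

section
/- If g: X → X is a continuous map of a compact metric space and A, B are disjoint compact invariant sets whose basins B(A) = {x : ω(x) ⊆ A} and B(B) = {x : ω(x) ⊆ B} are each dense in X, then both basins (and hence their union) are meager, i.e., contained in countable unions of nowhere dense sets. -/
open Set Filter Topology

lemma omega_inter_nonempty {X : Type*} [MetricSpace X] [CompactSpace X]
    (g : X → X) (x : X) (C : Set X) (hC : IsClosed C)
    (h : ∀ k : ℕ, ∃ l, k ≤ l ∧ g^[l] x ∈ C) :
    ((⋂ k : ℕ, closure (⋃ l : ℕ, ⋃ _ : k ≤ l, {g^[l] x})) ∩ C).Nonempty := by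
  set T : ℕ → Set X := fun k => closure (⋃ l : ℕ, ⋃ _ : k ≤ l, {g^[l] x}) ∩ C with hT
  have hTc : ∀ k, IsClosed (T k) := fun k => isClosed_closure.inter hC
  have hmono : ∀ k, T (k + 1) ⊆ T k := by
    intro k
    apply inter_subset_inter_left
    apply closure_mono
    intro y hy
    simp only [mem_iUnion, mem_singleton_iff] at hy ⊢
    obtain ⟨l, hl, rfl⟩ := hy
    exact ⟨l, by omega, rfl⟩
  have hne : ∀ k, (T k).Nonempty := by
    intro k
    obtain ⟨l, hl, hmem⟩ := h k
    exact ⟨g^[l] x, subset_closure (mem_iUnion₂.mpr ⟨l, hl, rfl⟩), hmem⟩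
  obtain ⟨y, hy⟩ := IsCompact.nonempty_iInter_of_sequence_nonempty_isCompact_isClosed
    T hmono hne (hTc 0).isCompact hTc
  simp only [mem_iInter, hT, mem_inter_iff] at hy
  exact ⟨y, mem_iInter.mpr fun k => (hy k).1, (hy 0).2⟩

lemma basin_meagre {X : Type*} [MetricSpace X] [CompactSpace X]
    (g : X → X) (hg : Continuous g)
    (A B : Set X) (hA : IsCompact A) (hB : IsCompact B)
    (hdisj : Disjoint A B)
    (ω : X → Set X)
    (hω : ∀ x, ω x = ⋂ k : ℕ, closure (⋃ l : ℕ, ⋃ _ : k ≤ l, {g^[l] x}))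
    (hdB : Dense {x | ω x ⊆ B}) : IsMeagre {x | ω x ⊆ A} := by
  obtain ⟨U, V, hUopen, hVopen, hAU, hBV, hUV⟩ :=
    SeparatedNhds.of_isCompact_isCompact hA hB hdisj
  set S : ℕ → Set X := fun k => {x | ∀ l, k ≤ l → g^[l] x ∈ Vᶜ} with hS
  have hScl : ∀ k, IsClosed (S k) := by
    intro k
    have : S k = ⋂ l : ℕ, ⋂ _ : k ≤ l, (g^[l]) ⁻¹' Vᶜ := by
      ext y; simp [hS]
    rw [this]
    exact isClosed_iInter fun l => isClosed_iInter fun _ =>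
      (hVopen.isClosed_compl).preimage (hg.iterate l)
  have hSsub : {x | ω x ⊆ A} ⊆ ⋃ k, S k := by
    intro x hx
    by_contra hxn
    simp only [mem_iUnion, hS, mem_setOf_eq, not_exists, not_forall] at hxn
    have h : ∀ k : ℕ, ∃ l, k ≤ l ∧ g^[l] x ∈ Uᶜ := by
      intro k
      obtain ⟨l, hl, hmem⟩ := hxn k
      refine ⟨l, hl, fun hU => ?_⟩
      exact hmem (by simp [hUV.subset_compl_right hU])
    obtain ⟨y, hy1, hy2⟩ := omega_inter_nonempty g x Uᶜ hUopen.isClosed_compl h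
    rw [← hω] at hy1
    exact hy2 (hAU (hx hy1))
  have hSint : ∀ k, interior (S k) = ∅ := by
    intro k
    by_contra hne
    obtain ⟨y, hy⟩ := hdB.inter_open_nonempty _ isOpen_interior
      (nonempty_iff_ne_empty.mpr hne)
    have hyS : y ∈ S k := interior_subset hy.1
    have hyB : ω y ⊆ B := hy.2
    -- ω y is nonempty
    obtain ⟨z, hz1, _⟩ := omega_inter_nonempty g y univ isClosed_univ
      (fun m => ⟨m, le_rfl, mem_univ _⟩)
    rw [← hω] at hz1
    -- but ω y ⊆ Vᶜ since tail from k is in Vᶜ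
    have hzV : z ∈ Vᶜ := by
      have : ω y ⊆ closure (⋃ l : ℕ, ⋃ _ : k ≤ l, {g^[l] y}) := by
        rw [hω]; exact iInter_subset _ k
      have hsub : closure (⋃ l : ℕ, ⋃ _ : k ≤ l, {g^[l] y}) ⊆ Vᶜ := by
        apply closure_minimal _ hVopen.isClosed_compl
        intro w hw
        simp only [mem_iUnion, mem_singleton_iff] at hw
        obtain ⟨l, hl, rfl⟩ := hw
        exact hyS l hl
      exact hsub (this hz1)
    exact hzV (hBV (hyB hz1))
  rw [isMeagre_iff_countable_union_isNowhereDense]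
  refine ⟨range S, ?_, countable_range S, ?_⟩
  · rintro s ⟨k, rfl⟩
    exact (hScl k).isNowhereDense_iff.mpr (hSint k)
  · rwa [sUnion_range]

/-- If two disjoint compact invariant sets of a continuous map on a compact
metric space have basins (for the ω-limit set) that are each dense, then both
basins, and hence their union, are meager. -/
theorem stmt_16 {X : Type*} [MetricSpace X] [CompactSpace X]
    (g : X → X) (hg : Continuous g)
    (A B : Set X) (hA : IsCompact A) (hB : IsCompact B)
    (hAinv : g '' A ⊆ A) (hBinv : g '' B ⊆ B)
    (hdisj : Disjoint A B)
    (ω : X → Set X)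
    (hω : ∀ x, ω x = ⋂ k : ℕ, closure (⋃ l : ℕ, ⋃ _ : k ≤ l, {g^[l] x}))
    (hdA : Dense {x | ω x ⊆ A}) (hdB : Dense {x | ω x ⊆ B}) :
    IsMeagre {x | ω x ⊆ A} ∧ IsMeagre {x | ω x ⊆ B} ∧
      IsMeagre ({x | ω x ⊆ A} ∪ {x | ω x ⊆ B}) := by
  have h1 := basin_meagre g hg A B hA hB hdisj ω hω hdB
  have h2 := basin_meagre g hg B A hB hA hdisj.symm ω hω hdA
  refine ⟨h1, h2, ?_⟩
  rw [IsMeagre, compl_union]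
  exact Filter.inter_mem h1 h2
end
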